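/- Let f ∈ K[x,y] be a weakly tame polynomial and suppose the K[x,y]-module V_f is generated (not necessarily freely) by the Hamiltonian vector field X₀ = (−f_y, f_x) and a second element X_* = (P_*, Q_*) ∈ V_f with cofactor k_*. Then k_* is a nonzero constant c ∈ K, and consequently f = (P_* f_x + Q_* f_y)/c belongs to the Jacobian ideal J(f) = ⟨f_x, f_y⟩ of K[x,y]. -/

import Mathlib

/-!
Both `(f, 0)` and `(0, f)` lie in `V_f`, with cofactors `f_x` and `f_y`. Writing them as
combinations `a X₀ + b X_*` and using that `X₀` has cofactor `0`, every cofactor is a multiple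
of `k_*`; hence `J(f) ⊆ (k_*)`. Since `K[x,y]/J(f)` is finite-dimensional, the images of `x` and
`y` are algebraic, so `J(f)` contains a nonzero polynomial in `x` alone and one in `y` alone.
A common divisor of these involves no variable, so `k_*` is a nonzero constant.
-/

open MvPolynomial

/-- `X ∈ V_f`: the pair `X = (P, Q)` defines a polynomial vector field
`P ∂/∂x + Q ∂/∂y` admitting the curve `f = 0` as an invariant curve,
i.e. `P f_x + Q f_y = k f` for some cofactor `k`. -/
def VfMem {K : Type*} [Field K] (f : MvPolynomial (Fin 2) K)
    (X : MvPolynomial (Fin 2) K × MvPolynomial (Fin 2) K) : Prop :=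
  ∃ k : MvPolynomial (Fin 2) K,
    X.1 * pderiv (0 : Fin 2) f + X.2 * pderiv (1 : Fin 2) f = k * f

section Vars

variable {σ R : Type*} [CommSemiring R]

theorem MvPolynomial.vars_subset_of_dvd [NoZeroDivisors R] {p q : MvPolynomial σ R}
    (h : p ∣ q) (hq : q ≠ 0) : p.vars ⊆ q.vars := by
  classical
  obtain ⟨r, rfl⟩ := h
  rw [vars_def, vars_def, degrees_mul_eq (left_ne_zero_of_mul hq) (right_ne_zero_of_mul hq),
    Multiset.toFinset_add]
  exact Finset.subset_union_left

theorem Polynomial.vars_toMvPolynomial_subset (i : σ) (p : Polynomial R) :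
    (p.toMvPolynomial i).vars ⊆ {i} := by
  classical
  rw [toMvPolynomial_eq_rename_comp]
  refine (vars_rename _ _).trans fun x hx => ?_
  obtain ⟨_, _, rfl⟩ := Finset.mem_image.mp hx
  exact Finset.mem_singleton_self i

theorem MvPolynomial.eq_C_of_forall_dvd_notMem_vars [NoZeroDivisors R] {k : MvPolynomial σ R}
    (h : ∀ i, ∃ q, q ≠ 0 ∧ k ∣ q ∧ i ∉ q.vars) : k = C (coeff 0 k) := by
  refine vars_eq_empty_iff_eq_C.mp (Finset.eq_empty_of_forall_notMem fun i hi => ?_)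
  obtain ⟨q, hq, hkq, hiq⟩ := h i
  exact hiq (vars_subset_of_dvd hkq hq hi)

end Vars

section FiniteCodimension

variable {σ K : Type*} [Field K] (J : Ideal (MvPolynomial σ K))
  [FiniteDimensional K (MvPolynomial σ K ⧸ J)]

theorem exists_toMvPolynomial_mem_of_finiteDimensional (i : σ) :
    ∃ p : Polynomial K, p ≠ 0 ∧ p.toMvPolynomial i ∈ J := by
  obtain ⟨p, hmonic, hp⟩ := IsIntegral.of_finite K (Ideal.Quotient.mkₐ K J (X i))
  refine ⟨p, hmonic.ne_zero, Ideal.Quotient.eq_zero_iff_mem.mp ?_⟩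
  rw [← Polynomial.aeval_def, Polynomial.aeval_algHom_apply] at hp
  exact hp

theorem exists_ne_zero_mem_notMem_vars_of_finiteDimensional {i j : σ} (hij : j ≠ i) :
    ∃ q, q ≠ 0 ∧ q ∈ J ∧ i ∉ q.vars := by
  obtain ⟨p, hp, hpJ⟩ := exists_toMvPolynomial_mem_of_finiteDimensional J j
  refine ⟨p.toMvPolynomial j, ?_, hpJ, fun hi => hij ?_⟩
  · exact (map_ne_zero_iff _ (Polynomial.toMvPolynomial_injective j)).mpr hp
  · exact (Finset.mem_singleton.mp (Polynomial.vars_toMvPolynomial_subset j p hi)).symm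

theorem exists_eq_C_of_le_span_singleton_of_finiteDimensional [Nontrivial σ]
    {k : MvPolynomial σ K} (hJk : J ≤ Ideal.span {k}) : ∃ c : K, c ≠ 0 ∧ k = C c := by
  have hdiv : ∀ i, ∃ q, q ≠ 0 ∧ k ∣ q ∧ i ∉ q.vars := fun i => by
    obtain ⟨j, hji⟩ := exists_ne i
    obtain ⟨q, hq, hqJ, hiq⟩ := exists_ne_zero_mem_notMem_vars_of_finiteDimensional J hji
    exact ⟨q, hq, Ideal.mem_span_singleton.mp (hJk hqJ), hiq⟩
  have hk := eq_C_of_forall_dvd_notMem_vars hdiv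
  refine ⟨coeff 0 k, fun h0 => ?_, hk⟩
  obtain ⟨q, hq, hkq, -⟩ := hdiv (Classical.arbitrary σ)
  rw [hk, h0, map_zero] at hkq
  exact hq (zero_dvd_iff.mp hkq)

end FiniteCodimension

section InvariantCurves

variable {K : Type*} [Field K] {f Pstar Qstar kstar : MvPolynomial (Fin 2) K}

theorem dvd_cofactor_of_generated (hf : f ≠ 0)
    (hcof : Pstar * pderiv (0 : Fin 2) f + Qstar * pderiv (1 : Fin 2) f = kstar * f)
    (hgen : ∀ w, VfMem f w →
      ∃ a b : MvPolynomial (Fin 2) K,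
        w = a • (-(pderiv (1 : Fin 2) f), pderiv (0 : Fin 2) f) + b • (Pstar, Qstar))
    {w : MvPolynomial (Fin 2) K × MvPolynomial (Fin 2) K} {k : MvPolynomial (Fin 2) K}
    (hw : w.1 * pderiv (0 : Fin 2) f + w.2 * pderiv (1 : Fin 2) f = k * f) : kstar ∣ k := by
  obtain ⟨a, b, rfl⟩ := hgen w ⟨k, hw⟩
  refine ⟨b, mul_right_cancel₀ hf ?_⟩
  simp only [Prod.fst_add, Prod.snd_add, Prod.smul_fst, Prod.smul_snd, smul_eq_mul] at hw
  linear_combination -hw + b * hcof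

theorem jacobianIdeal_le_span_cofactor_of_generated (hf : f ≠ 0)
    (hcof : Pstar * pderiv (0 : Fin 2) f + Qstar * pderiv (1 : Fin 2) f = kstar * f)
    (hgen : ∀ w, VfMem f w →
      ∃ a b : MvPolynomial (Fin 2) K,
        w = a • (-(pderiv (1 : Fin 2) f), pderiv (0 : Fin 2) f) + b • (Pstar, Qstar)) :
    Ideal.span {pderiv (0 : Fin 2) f, pderiv (1 : Fin 2) f} ≤ Ideal.span {kstar} := by
  rw [Ideal.span_le, Set.insert_subset_iff, Set.singleton_subset_iff]
  exact ⟨Ideal.mem_span_singleton.mpr (dvd_cofactor_of_generated (w := (f, 0)) hf hcof hgen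
      (by ring)),
    Ideal.mem_span_singleton.mpr (dvd_cofactor_of_generated (w := (0, f)) hf hcof hgen
      (by ring))⟩

end InvariantCurves

theorem stmt2_general (K : Type*) [Field K]
    (f : MvPolynomial (Fin 2) K)
    (hwt : FiniteDimensional K
      (MvPolynomial (Fin 2) K ⧸
        Ideal.span {pderiv (0 : Fin 2) f, pderiv (1 : Fin 2) f}))
    (Pstar Qstar kstar : MvPolynomial (Fin 2) K)
    (hcof : Pstar * pderiv (0 : Fin 2) f + Qstar * pderiv (1 : Fin 2) f = kstar * f)
    (hgen : ∀ w, VfMem f w →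
      ∃ a b : MvPolynomial (Fin 2) K,
        w = a • (-(pderiv (1 : Fin 2) f), pderiv (0 : Fin 2) f) + b • (Pstar, Qstar)) :
    (∃ c : K, c ≠ 0 ∧ kstar = C c) ∧
      f ∈ Ideal.span {pderiv (0 : Fin 2) f, pderiv (1 : Fin 2) f} := by
  obtain ⟨q, hq, hqJ, -⟩ := exists_ne_zero_mem_notMem_vars_of_finiteDimensional
    (Ideal.span {pderiv (0 : Fin 2) f, pderiv (1 : Fin 2) f}) (zero_ne_one' (Fin 2))
  have hf : f ≠ 0 := by
    rintro rfl
    simp only [map_zero, Set.pair_eq_singleton, Ideal.span_singleton_eq_bot.mpr rfl,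
      Ideal.mem_bot] at hqJ
    exact hq hqJ
  obtain ⟨c, hc, rfl⟩ := exists_eq_C_of_le_span_singleton_of_finiteDimensional _
    (jacobianIdeal_le_span_cofactor_of_generated hf hcof hgen)
  refine ⟨⟨c, hc, rfl⟩, Ideal.mem_span_pair.mpr ⟨C c⁻¹ * Pstar, C c⁻¹ * Qstar, ?_⟩⟩
  have hinv : C c⁻¹ * C c = (1 : MvPolynomial (Fin 2) K) := by
    rw [← map_mul, inv_mul_cancel₀ hc, map_one]
  linear_combination C c⁻¹ * hcof + f * hinv

/-- If `f ∈ K[x,y]` is weakly tame and `V_f` is generated (not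
necessarily freely) by `X₀ = (-f_y, f_x)` and a second element
`X_* = (P_*, Q_*) ∈ V_f` with cofactor `k_*`, then `k_*` is a nonzero constant
`c ∈ K`, and consequently `f = (P_* f_x + Q_* f_y)/c ∈ J(f) = ⟨f_x, f_y⟩`. -/
theorem stmt2 (K : Type*) [Field K] [Algebra K ℂ]
    (f : MvPolynomial (Fin 2) K)
    (hwt : FiniteDimensional K
      (MvPolynomial (Fin 2) K ⧸
        Ideal.span {pderiv (0 : Fin 2) f, pderiv (1 : Fin 2) f}))
    (Pstar Qstar kstar : MvPolynomial (Fin 2) K)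
    (hcof : Pstar * pderiv (0 : Fin 2) f + Qstar * pderiv (1 : Fin 2) f = kstar * f)
    (hgen : ∀ w, VfMem f w →
      ∃ a b : MvPolynomial (Fin 2) K,
        w = a • (-(pderiv (1 : Fin 2) f), pderiv (0 : Fin 2) f) + b • (Pstar, Qstar)) :
    (∃ c : K, c ≠ 0 ∧ kstar = C c) ∧
      f ∈ Ideal.span {pderiv (0 : Fin 2) f, pderiv (1 : Fin 2) f} :=
  stmt2_general K f hwt Pstar Qstar kstar hcof hgen
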